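/- Define M_n by M_0(x)=x+3 and M_n(x) = M_{n-1}(f(x))·((x+1)(x+3))^{3^{n-1}} with f(x)=(x^2-x+4)/(x+3), and T_n by T_0(z)=z+1, T_n(z)=(z+2)^{3^{n-1}}T_{n-1}(z^2+z). Then M_n(x) = 2^{(3^{n+1}+1)/2} · T_n(φ(x)) / φ(x)^{3^n}, where φ(x) = 4/(x-1). -/

import Mathlib

/-!
The substitution `z = φ x` conjugates `f` to `z ↦ z² + z`, and turns the factor
`(x + 1)(x + 3)` into `8 (z + 2)(z + 1) / z²`. Hence the right-hand side, viewed as a function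
of `z`, obeys the same recursion as `M`, and the identity follows by induction on `n`, applied
along the orbit of `x`.
-/

open Polynomial

noncomputable def fmap (x : ℂ) : ℂ := (x ^ 2 - x + 4) / (x + 3)

noncomputable def M : ℕ → ℂ → ℂ
  | 0 => fun x => x + 3
  | n + 1 => fun x => M n (fmap x) * ((x + 1) * (x + 3)) ^ (3 ^ n)

noncomputable def T : ℕ → Polynomial ℤ
  | 0 => X + 1
  | n + 1 => (X + 2) ^ (3 ^ n) * (T n).comp (X ^ 2 + X)

noncomputable def φ (x : ℂ) : ℂ := 4 / (x - 1)

lemma aeval_T_succ {R : Type*} [CommRing R] (n : ℕ) (z : R) :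
    aeval z (T (n + 1)) = (z + 2) ^ (3 ^ n) * aeval (z ^ 2 + z) (T n) := by
  simp [T, aeval_comp, map_ofNat]

lemma three_pow_succ_succ_add_one_div_two (n : ℕ) :
    (3 ^ (n + 2) + 1) / 2 = (3 ^ (n + 1) + 1) / 2 + 3 ^ (n + 1) := by
  obtain ⟨k, hk⟩ := Odd.pow (n := n + 1) (by decide : Odd 3)
  rw [pow_succ 3 (n + 1)]
  omega

section RescaledT

variable {K : Type*} [Field K]

noncomputable def rescaledT (n : ℕ) (z : K) : K :=
  2 ^ ((3 ^ (n + 1) + 1) / 2) * aeval z (T n) / z ^ (3 ^ n)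

lemma rescaledT_zero (z : K) : rescaledT 0 z = 4 * (z + 1) / z := by
  simp only [rescaledT, T, map_add, aeval_X, map_one]
  norm_num

lemma rescaledT_succ (n : ℕ) {z : K} (hz : z ≠ 0) (hz1 : z + 1 ≠ 0) :
    rescaledT (n + 1) z = rescaledT n (z ^ 2 + z) * (8 * (z + 2) * (z + 1) / z ^ 2) ^ (3 ^ n) := by
  rw [rescaledT, rescaledT, aeval_T_succ, three_pow_succ_succ_add_one_div_two, pow_add (2 : K)]
  -- with the exponent `3 ^ n` abstracted, `field_simp` and `ring` see a plain identity
  generalize (2 : K) ^ ((3 ^ (n + 1) + 1) / 2) = c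
  rw [pow_succ' 3 n, pow_mul, pow_mul]
  generalize 3 ^ n = m
  rw [show z ^ 2 + z = z * (z + 1) by ring, div_pow, mul_pow, mul_pow, mul_pow]
  field_simp
  ring

end RescaledT

section Conjugacy

variable {x : ℂ}

lemma φ_ne_zero (hx : x ≠ 1) : φ x ≠ 0 :=
  div_ne_zero (by norm_num) (sub_ne_zero.mpr hx)

lemma φ_add_one_ne_zero (hx : x ≠ 1) (hx3 : x + 3 ≠ 0) : φ x + 1 ≠ 0 := by
  have hx1 : x - 1 ≠ 0 := sub_ne_zero.mpr hx
  rw [φ, div_add_one hx1]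
  refine div_ne_zero (fun h => hx3 ?_) hx1
  linear_combination h

lemma fmap_sub_one (hx3 : x + 3 ≠ 0) : fmap x - 1 = (x - 1) ^ 2 / (x + 3) := by
  rw [fmap]
  field_simp
  ring

lemma fmap_ne_one (hx : x ≠ 1) (hx3 : x + 3 ≠ 0) : fmap x ≠ 1 := by
  rw [← sub_ne_zero, fmap_sub_one hx3]
  exact div_ne_zero (pow_ne_zero 2 (sub_ne_zero.mpr hx)) hx3

lemma φ_fmap (hx3 : x + 3 ≠ 0) : φ (fmap x) = φ x ^ 2 + φ x := by
  rw [φ, fmap_sub_one hx3, φ]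
  field_simp
  ring

lemma add_one_mul_add_three_eq (hx : x ≠ 1) :
    (x + 1) * (x + 3) = 8 * (φ x + 2) * (φ x + 1) / φ x ^ 2 := by
  have hx1 : x - 1 ≠ 0 := sub_ne_zero.mpr hx
  rw [φ]
  field_simp
  ring

end Conjugacy

theorem stmt7 (n : ℕ) (x : ℂ) (hx : x ≠ 1)
    (horb : ∀ j < n, fmap^[j] x ≠ -3) :
    M n x = 2 ^ ((3 ^ (n + 1) + 1) / 2) *
      Polynomial.aeval (φ x) (T n) / (φ x) ^ (3 ^ n) := by
  change M n x = rescaledT n (φ x)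
  induction n generalizing x with
  | zero =>
    rw [M, rescaledT_zero, φ]
    field_simp [sub_ne_zero.mpr hx]
    ring
  | succ n ih =>
    have hx3 : x + 3 ≠ 0 := fun h => horb 0 n.succ_pos (eq_neg_of_add_eq_zero_left h)
    have horb' : ∀ j < n, fmap^[j] (fmap x) ≠ -3 := fun j hj => horb (j + 1) (by omega)
    simp only [M]
    rw [ih (fmap x) (fmap_ne_one hx hx3) horb', φ_fmap hx3, add_one_mul_add_three_eq hx,
      rescaledT_succ n (φ_ne_zero hx) (φ_add_one_ne_zero hx hx3)]
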